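/- Under assumptions (A1), (A2) and (A3), the remainder of the first-order von Mises expansion of the mean functional, R_{μ,ν} := μ̂_ν − μ_ν − (1/N_ν) ∑_{k∈s_ν} (Y_{k,ν} − μ_ν)/π_{k,ν}, is o_p(n_ν^{−1/2}): for every ε > 0, p_ν(√(n_ν) ‖R_{μ,ν}‖ > ε) → 0 as ν → ∞. Equivalently, μ̂_ν − μ_ν = ∑_{k∈U_ν} u_{k,ν} (I_k/π_{k,ν} − 1) + o_p(n_ν^{−1/2}) with linearized variable u_{k,ν} = (Y_{k,ν} − μ_ν)/N_ν. -/

import Mathlib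

/-!
Write `N̂ = ∑_{k ∈ s} 1 / π_k`, `D = N̂ - N = ∑_k (I_k / π_k - 1)` and
`T = ∑_k (I_k / π_k - 1) (Y_k - μ)`. Since the centred curves sum to zero,
`T = ∑_{k ∈ s} (Y_k - μ) / π_k`, and the remainder is `R = (1 / N̂ - 1 / N) T = -D T / (N̂ N)`.
On a sample of size `n` every weight `1 / π_k` is at least `1`, so `N̂ ≥ n` and
`‖R‖ ≤ |D| ‖T‖ / (n N)`. Both `D` and `T` are Horvitz–Thompson errors of bounded variables; their
second moments `∑_{k,l} Δ_{kl} / (π_k π_l) ⟪u_k, u_l⟫` are `O(N / λ + N² max |Δ| / λ²) = O(N)`,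
using (A3) and `N λ ≤ ∑_k π_k = n`. Cauchy–Schwarz then gives `E (|D| ‖T‖) = O(N)`, and Markov's
inequality bounds `p(√n ‖R‖ > ε)` by `O(1 / √n)`.
-/

open scoped RealInnerProductSpace
open Filter Topology Finset

noncomputable section

theorem sum_ite_lt_le_div {ι : Type*} [Fintype ι] {w f g : ι → ℝ} (hw : ∀ i, 0 ≤ w i)
    (hg : ∀ i, 0 ≤ g i) (hfg : ∀ i, w i ≠ 0 → f i ≤ g i) {ε : ℝ} (hε : 0 < ε) :
    ∑ i, (if ε < f i then w i else 0) ≤ (∑ i, w i * g i) / ε := by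
  rw [le_div_iff₀ hε, sum_mul]
  refine sum_le_sum fun i _ => ?_
  split_ifs with hi
  · obtain hwi | hwi := eq_or_ne (w i) 0
    · simp [hwi]
    · exact mul_le_mul_of_nonneg_left (hi.le.trans (hfg i hwi)) (hw i)
  · simpa using mul_nonneg (hw i) (hg i)

namespace SamplingDesign

variable {F : Type*} [Fintype F] {H : Type*} [NormedAddCommGroup H] [InnerProductSpace ℝ H]

def popMean (Y : F → H) : H := (Fintype.card F : ℝ)⁻¹ • ∑ k, Y k

theorem sum_sub_popMean (Y : F → H) : ∑ k, (Y k - popMean Y) = 0 := by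
  rcases isEmpty_or_nonempty F with hF | hF
  · simp
  rw [sum_sub_distrib, sum_const, card_univ, ← Nat.cast_smul_eq_nsmul ℝ, popMean, smul_smul,
    mul_inv_cancel₀ (by positivity), one_smul, sub_self]

theorem norm_popMean_le {Y : F → H} {C : ℝ} (hC : 0 ≤ C) (hY : ∀ k, ‖Y k‖ ≤ C) :
    ‖popMean Y‖ ≤ C := by
  rcases isEmpty_or_nonempty F with hF | hF
  · simp [popMean, hC]
  rw [popMean, norm_smul, norm_inv, Real.norm_natCast, inv_mul_le_iff₀ (by positivity)]
  simpa using norm_sum_le_of_le univ fun k _ => hY k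

variable [DecidableEq F] {p : Finset F → ℝ} {n : ℕ}

def inclProb (p : Finset F → ℝ) (k : F) : ℝ := ∑ s, if k ∈ s then p s else 0

def jointInclProb (p : Finset F → ℝ) (k l : F) : ℝ := ∑ s, if k ∈ s ∧ l ∈ s then p s else 0

/-- `I_k / π_k - 1`; summed against `u_k` it gives the error of the Horvitz–Thompson estimator
of `∑_k u_k`. -/
def htDeviation (p : Finset F → ℝ) (s : Finset F) (k : F) : ℝ :=
  (if k ∈ s then (inclProb p k)⁻¹ else 0) - 1

theorem inclProb_le_one (hp0 : ∀ s, 0 ≤ p s) (hp1 : ∑ s, p s = 1) (k : F) :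
    inclProb p k ≤ 1 :=
  hp1 ▸ sum_le_sum fun s _ => by split_ifs <;> simp [hp0 s]

theorem jointInclProb_self (k : F) : jointInclProb p k k = inclProb p k := by
  simp [jointInclProb, inclProb]

theorem sum_inclProb (hp1 : ∑ s, p s = 1) (hsize : ∀ s, p s ≠ 0 → s.card = n) :
    ∑ k, inclProb p k = n := by
  calc ∑ k, inclProb p k = ∑ s, (s.card : ℝ) * p s := by
        simp only [inclProb]
        rw [sum_comm]
        simp [sum_ite_mem]
    _ = ∑ s, (n : ℝ) * p s := sum_congr rfl fun s _ => by
        by_cases h : p s = 0 <;> simp [h, hsize]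
    _ = n := by rw [← mul_sum, hp1, mul_one]

theorem sampleSize_le_card (hp0 : ∀ s, 0 ≤ p s) (hp1 : ∑ s, p s = 1)
    (hsize : ∀ s, p s ≠ 0 → s.card = n) : (n : ℝ) ≤ Fintype.card F := by
  calc (n : ℝ) = ∑ k, inclProb p k := (sum_inclProb hp1 hsize).symm
    _ ≤ ∑ _k : F, 1 := sum_le_sum fun k _ => inclProb_le_one hp0 hp1 k
    _ = Fintype.card F := by simp

theorem card_mul_le_sampleSize (hp1 : ∑ s, p s = 1) (hsize : ∀ s, p s ≠ 0 → s.card = n)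
    {lam : ℝ} (hlam : ∀ k, lam ≤ inclProb p k) : (Fintype.card F : ℝ) * lam ≤ n := by
  calc (Fintype.card F : ℝ) * lam = ∑ _k : F, lam := by simp
    _ ≤ ∑ k, inclProb p k := sum_le_sum fun k _ => hlam k
    _ = n := sum_inclProb hp1 hsize

theorem sum_mul_htDeviation (hp1 : ∑ s, p s = 1) {k : F} (hk : inclProb p k ≠ 0) :
    ∑ s, p s * htDeviation p s k = 0 := by
  have hterm : ∀ s, p s * htDeviation p s k
      = (inclProb p k)⁻¹ * (if k ∈ s then p s else 0) - p s := by
    intro s; unfold htDeviation; split_ifs <;> ring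
  rw [sum_congr rfl fun s _ => hterm s, sum_sub_distrib, ← mul_sum, hp1, ← inclProb,
    inv_mul_cancel₀ hk, sub_self]

theorem sum_mul_htDeviation_mul (hp1 : ∑ s, p s = 1) {k l : F} (hk : inclProb p k ≠ 0)
    (hl : inclProb p l ≠ 0) :
    ∑ s, p s * (htDeviation p s k * htDeviation p s l)
      = (jointInclProb p k l - inclProb p k * inclProb p l) / (inclProb p k * inclProb p l) := by
  -- `(a - 1)(b - 1) = ab - (a - 1) - (b - 1) - 1`, and `ab = I_k I_l / (π_k π_l)`
  have hterm : ∀ s, p s * (htDeviation p s k * htDeviation p s l)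
      = (inclProb p k * inclProb p l)⁻¹ * (if k ∈ s ∧ l ∈ s then p s else 0)
        - p s * htDeviation p s k - p s * htDeviation p s l - p s := by
    intro s
    unfold htDeviation
    by_cases hks : k ∈ s <;> by_cases hls : l ∈ s <;> simp [hks, hls] <;> ring
  rw [sum_congr rfl fun s _ => hterm s, sum_sub_distrib, sum_sub_distrib, sum_sub_distrib,
    sum_mul_htDeviation hp1 hk, sum_mul_htDeviation hp1 hl, hp1, ← mul_sum, ← jointInclProb]
  field_simp
  ring

theorem sum_mul_norm_sq_htError (hp1 : ∑ s, p s = 1) (hπ : ∀ k, inclProb p k ≠ 0) (u : F → H) :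
    ∑ s, p s * ‖∑ k, htDeviation p s k • u k‖ ^ 2
      = ∑ k, ∑ l, (jointInclProb p k l - inclProb p k * inclProb p l)
          / (inclProb p k * inclProb p l) * ⟪u k, u l⟫ := by
  simp_rw [← real_inner_self_eq_norm_sq, sum_inner, inner_sum, real_inner_smul_left,
    real_inner_smul_right, mul_sum]
  rw [sum_comm]
  refine sum_congr rfl fun k _ => ?_
  rw [sum_comm]
  refine sum_congr rfl fun l _ => ?_
  rw [← sum_mul_htDeviation_mul hp1 (hπ k) (hπ l), sum_mul]
  exact sum_congr rfl fun s _ => by ring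

theorem abs_covariance_div_le (hp0 : ∀ s, 0 ≤ p s) (hp1 : ∑ s, p s = 1) {lam δ : ℝ}
    (hlam : 0 < lam) (hπ : ∀ k, lam ≤ inclProb p k) (hδ : 0 ≤ δ)
    (hΔ : ∀ k l, k ≠ l → |jointInclProb p k l - inclProb p k * inclProb p l| ≤ δ) (k l : F) :
    |(jointInclProb p k l - inclProb p k * inclProb p l) / (inclProb p k * inclProb p l)|
      ≤ (if k = l then lam⁻¹ else 0) + δ / lam ^ 2 := by
  have hπpos : ∀ k, 0 < inclProb p k := fun k => hlam.trans_le (hπ k)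
  obtain rfl | hkl := eq_or_ne k l
  · have hk := hπpos k
    rw [jointInclProb_self, if_pos rfl, show inclProb p k - inclProb p k * inclProb p k
      = inclProb p k * (1 - inclProb p k) by ring, mul_div_mul_left _ _ hk.ne',
      abs_of_nonneg (div_nonneg (sub_nonneg.2 (inclProb_le_one hp0 hp1 k)) hk.le)]
    calc (1 - inclProb p k) / inclProb p k ≤ 1 / lam :=
          div_le_div₀ zero_le_one (by linarith) hlam (hπ k)
      _ ≤ lam⁻¹ + δ / lam ^ 2 := by rw [one_div]; linarith [div_nonneg hδ (sq_nonneg lam)]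
  · rw [if_neg hkl, zero_add, abs_div, abs_of_pos (mul_pos (hπpos k) (hπpos l)), sq]
    exact div_le_div₀ hδ (hΔ k l hkl) (mul_pos hlam hlam)
      (mul_le_mul (hπ k) (hπ l) hlam.le (hπpos k).le)

theorem sum_mul_norm_sq_htError_le (hp0 : ∀ s, 0 ≤ p s) (hp1 : ∑ s, p s = 1) {lam δ : ℝ}
    (hlam : 0 < lam) (hπ : ∀ k, lam ≤ inclProb p k) (hδ : 0 ≤ δ)
    (hΔ : ∀ k l, k ≠ l → |jointInclProb p k l - inclProb p k * inclProb p l| ≤ δ)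
    {u : F → H} {B : ℝ} (hu : ∀ k, ‖u k‖ ≤ B) :
    ∑ s, p s * ‖∑ k, htDeviation p s k • u k‖ ^ 2
      ≤ B ^ 2 * (Fintype.card F / lam + Fintype.card F ^ 2 * δ / lam ^ 2) := by
  have hinner : ∀ k l, |⟪u k, u l⟫| ≤ B ^ 2 := fun k l =>
    calc |⟪u k, u l⟫| ≤ ‖u k‖ * ‖u l‖ := abs_real_inner_le_norm _ _
      _ ≤ B * B := mul_le_mul (hu k) (hu l) (norm_nonneg _) ((norm_nonneg _).trans (hu k))
      _ = B ^ 2 := (sq B).symm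
  rw [sum_mul_norm_sq_htError hp1 fun k => (hlam.trans_le (hπ k)).ne']
  calc _ ≤ ∑ k : F, ∑ l : F, ((if k = l then lam⁻¹ else 0) + δ / lam ^ 2) * B ^ 2 := by
        refine sum_le_sum fun k _ => sum_le_sum fun l _ => ?_
        refine (le_abs_self _).trans ?_
        rw [abs_mul]
        exact mul_le_mul (abs_covariance_div_le hp0 hp1 hlam hπ hδ hΔ k l) (hinner k l)
          (abs_nonneg _) (by positivity)
    _ = _ := by
        simp only [add_mul, ite_mul, zero_mul, sum_add_distrib, sum_ite_eq, mem_univ, ↓reduceIte,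
          sum_const, card_univ, nsmul_eq_mul]
        ring

/-- The Horvitz–Thompson estimator `N̂ = ∑_{k ∈ s} 1 / π_k` of the population size. -/
def htSize (p : Finset F → ℝ) (s : Finset F) : ℝ := ∑ k ∈ s, (inclProb p k)⁻¹

def hajekMean (p : Finset F → ℝ) (Y : F → H) (s : Finset F) : H :=
  (htSize p s)⁻¹ • ∑ k ∈ s, (inclProb p k)⁻¹ • Y k

def vonMisesRemainder (p : Finset F → ℝ) (Y : F → H) (s : Finset F) : H :=
  hajekMean p Y s - popMean Y
    - (Fintype.card F : ℝ)⁻¹ • ∑ k ∈ s, (inclProb p k)⁻¹ • (Y k - popMean Y)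

theorem sum_htDeviation_smul (s : Finset F) (u : F → H) :
    ∑ k, htDeviation p s k • u k = ∑ k ∈ s, (inclProb p k)⁻¹ • u k - ∑ k, u k := by
  simp only [htDeviation, sub_smul, one_smul, sum_sub_distrib, ite_smul, zero_smul,
    sum_ite_mem, univ_inter]

theorem sum_htDeviation (s : Finset F) :
    ∑ k, htDeviation p s k = htSize p s - Fintype.card F := by
  simpa [htSize] using sum_htDeviation_smul (p := p) s fun _ => (1 : ℝ)

theorem vonMisesRemainder_eq {Y : F → H} {s : Finset F} (hs : htSize p s ≠ 0) :
    vonMisesRemainder p Y s = ((htSize p s)⁻¹ - (Fintype.card F : ℝ)⁻¹)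
      • ∑ k, htDeviation p s k • (Y k - popMean Y) := by
  have hcentred : ∑ k ∈ s, (inclProb p k)⁻¹ • (Y k - popMean Y)
      = ∑ k ∈ s, (inclProb p k)⁻¹ • Y k - htSize p s • popMean Y := by
    simp only [smul_sub, sum_sub_distrib, htSize, sum_smul]
  rw [sum_htDeviation_smul, sum_sub_popMean, sub_zero, sub_smul, vonMisesRemainder, hcentred,
    smul_sub (htSize p s)⁻¹, smul_smul, inv_mul_cancel₀ hs, one_smul, ← hcentred, hajekMean]

theorem sampleSize_le_htSize (hp0 : ∀ s, 0 ≤ p s) (hp1 : ∑ s, p s = 1)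
    (hsize : ∀ s, p s ≠ 0 → s.card = n) (hπ : ∀ k, 0 < inclProb p k) {s : Finset F}
    (hs : p s ≠ 0) : (n : ℝ) ≤ htSize p s := by
  calc (n : ℝ) = ∑ _k ∈ s, 1 := by simp [hsize s hs]
    _ ≤ htSize p s := sum_le_sum fun k _ =>
        one_le_inv₀ (hπ k) |>.2 (inclProb_le_one hp0 hp1 k)

theorem norm_vonMisesRemainder_le (hp0 : ∀ s, 0 ≤ p s) (hp1 : ∑ s, p s = 1)
    (hsize : ∀ s, p s ≠ 0 → s.card = n) (hn : 0 < n) (hπ : ∀ k, 0 < inclProb p k)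
    (Y : F → H) {s : Finset F} (hs : p s ≠ 0) :
    ‖vonMisesRemainder p Y s‖ ≤ |∑ k, htDeviation p s k|
      * ‖∑ k, htDeviation p s k • (Y k - popMean Y)‖ / (n * Fintype.card F) := by
  have hnpos : (0 : ℝ) < n := Nat.cast_pos.2 hn
  have hN : (0 : ℝ) < Fintype.card F := hnpos.trans_le (sampleSize_le_card hp0 hp1 hsize)
  have hn_le := sampleSize_le_htSize hp0 hp1 hsize hπ hs
  have hNhat : 0 < htSize p s := hnpos.trans_le hn_le
  have hdiff : (htSize p s)⁻¹ - (Fintype.card F : ℝ)⁻¹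
      = -(∑ k, htDeviation p s k) / (htSize p s * Fintype.card F) := by
    rw [sum_htDeviation]
    field_simp
    ring
  rw [vonMisesRemainder_eq hNhat.ne', norm_smul, Real.norm_eq_abs, hdiff, abs_div, abs_neg,
    abs_of_pos (mul_pos hNhat hN), div_mul_eq_mul_div]
  gcongr

theorem sum_mul_norm_sq_htError_le_card_mul (hp0 : ∀ s, 0 ≤ p s) (hp1 : ∑ s, p s = 1)
    (hsize : ∀ s, p s ≠ 0 → s.card = n) (hn : 0 < n) {lam CΔ : ℝ} (hlam : 0 < lam)
    (hπ : ∀ k, lam ≤ inclProb p k) (hCΔ : 0 ≤ CΔ)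
    (hΔ : ∀ k l, k ≠ l → n * |jointInclProb p k l - inclProb p k * inclProb p l| ≤ CΔ)
    {u : F → H} {B : ℝ} (hu : ∀ k, ‖u k‖ ≤ B) :
    ∑ s, p s * ‖∑ k, htDeviation p s k • u k‖ ^ 2
      ≤ B ^ 2 * (Fintype.card F * (lam⁻¹ + CΔ / lam ^ 3)) := by
  have hnpos : (0 : ℝ) < n := Nat.cast_pos.2 hn
  have hδ : ∀ k l, k ≠ l → |jointInclProb p k l - inclProb p k * inclProb p l| ≤ CΔ / n :=
    fun k l hkl => (le_div_iff₀' hnpos).2 (hΔ k l hkl)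
  refine (sum_mul_norm_sq_htError_le hp0 hp1 hlam hπ (by positivity) hδ hu).trans ?_
  gcongr
  -- `N λ ≤ n` turns the off-diagonal term `N² (CΔ / n) / λ²` into `N CΔ / λ³`
  set N : ℝ := (Fintype.card F : ℝ)
  have hNlam : N * lam ≤ n := card_mul_le_sampleSize hp1 hsize hπ
  calc N / lam + N ^ 2 * (CΔ / n) / lam ^ 2 = N / lam + N * CΔ / lam ^ 3 * (N * lam / n) := by
        field_simp
    _ ≤ N / lam + N * CΔ / lam ^ 3 * 1 := by
        gcongr
        exact (div_le_one hnpos).2 hNlam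
    _ = N * (lam⁻¹ + CΔ / lam ^ 3) := by ring

theorem tail_vonMisesRemainder_le (hp0 : ∀ s, 0 ≤ p s) (hp1 : ∑ s, p s = 1)
    (hsize : ∀ s, p s ≠ 0 → s.card = n) {lam CΔ : ℝ} (hlam : 0 < lam)
    (hπ : ∀ k, lam ≤ inclProb p k) (hCΔ : 0 ≤ CΔ)
    (hΔ : ∀ k l, k ≠ l → n * |jointInclProb p k l - inclProb p k * inclProb p l| ≤ CΔ)
    {Y : F → H} {C : ℝ} (hC : 0 ≤ C) (hY : ∀ k, ‖Y k‖ ≤ C) {ε : ℝ} (hε : 0 < ε) :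
    ∑ s, (if ε < √n * ‖vonMisesRemainder p Y s‖ then p s else 0)
      ≤ 2 * C * (lam⁻¹ + CΔ / lam ^ 3) / ε / √n := by
  obtain rfl | hn := Nat.eq_zero_or_pos n
  · simp [hε.not_gt]
  set N : ℝ := (Fintype.card F : ℝ)
  set K : ℝ := lam⁻¹ + CΔ / lam ^ 3
  set D : Finset F → ℝ := fun s => ∑ k, htDeviation p s k
  set T : Finset F → H := fun s => ∑ k, htDeviation p s k • (Y k - popMean Y)
  have hnpos : (0 : ℝ) < n := Nat.cast_pos.2 hn
  have hN : 0 < N := hnpos.trans_le (sampleSize_le_card hp0 hp1 hsize)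
  have hπpos : ∀ k, 0 < inclProb p k := fun k => hlam.trans_le (hπ k)
  have hNK : 0 ≤ N * K := by positivity
  have hD : ∑ s, p s * D s ^ 2 ≤ N * K := by
    simpa [D] using sum_mul_norm_sq_htError_le_card_mul hp0 hp1 hsize hn hlam hπ hCΔ hΔ
      (u := fun _ => (1 : ℝ)) (B := 1) (by simp)
  have hT : ∑ s, p s * ‖T s‖ ^ 2 ≤ (2 * C) ^ 2 * (N * K) := by
    refine sum_mul_norm_sq_htError_le_card_mul hp0 hp1 hsize hn hlam hπ hCΔ hΔ fun k =>
      (norm_sub_le _ _).trans ?_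
    linarith [hY k, norm_popMean_le hC hY]
  have hDT : ∑ s, p s * (|D s| * ‖T s‖) ≤ 2 * C * (N * K) := by
    have hCS := sum_sq_le_sum_mul_sum_of_sq_le_mul univ (r := fun s => p s * (|D s| * ‖T s‖))
      (fun s _ => mul_nonneg (hp0 s) (sq_nonneg (D s)))
      (fun s _ => mul_nonneg (hp0 s) (sq_nonneg ‖T s‖))
      (fun s _ => le_of_eq (by rw [← sq_abs (D s)]; ring))
    refine le_of_pow_le_pow_left₀ two_ne_zero (by positivity) (hCS.trans ?_)
    calc _ ≤ (N * K) * ((2 * C) ^ 2 * (N * K)) :=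
          mul_le_mul hD hT (sum_nonneg fun s _ => mul_nonneg (hp0 s) (sq_nonneg _)) hNK
      _ = _ := by ring
  have hmarkov := sum_ite_lt_le_div hp0 (g := fun s => √n * (|D s| * ‖T s‖ / (n * N)))
    (fun s => by positivity)
    (fun s hs => mul_le_mul_of_nonneg_left
      (norm_vonMisesRemainder_le hp0 hp1 hsize hn hπpos Y hs) (Real.sqrt_nonneg _)) hε
  refine hmarkov.trans ?_
  have hsqrt : √(n : ℝ) ^ 2 = n := Real.sq_sqrt hnpos.le
  calc (∑ s, p s * (√n * (|D s| * ‖T s‖ / (n * N)))) / ε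
      = √n / (n * N) * (∑ s, p s * (|D s| * ‖T s‖)) / ε := by
        rw [mul_sum]
        congr 1
        exact sum_congr rfl fun s _ => by ring
    _ ≤ √n / (n * N) * (2 * C * (N * K)) / ε := by gcongr
    _ = 2 * C * K / ε / √n := by
        field_simp
        rw [hsqrt]

end SamplingDesign

open SamplingDesign in
theorem mean_functional_remainder_negligible_general
    {H : Type*} [NormedAddCommGroup H] [InnerProductSpace ℝ H]
    (Nn n : ℕ → ℕ)
    (hn : Tendsto n atTop atTop)
    (Y : (ν : ℕ) → Fin (Nn ν) → H)
    (p : (ν : ℕ) → Finset (Fin (Nn ν)) → ℝ)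
    (hp0 : ∀ ν s, 0 ≤ p ν s)
    (hp1 : ∀ ν, ∑ s : Finset (Fin (Nn ν)), p ν s = 1)
    (hsize : ∀ ν s, p ν s ≠ 0 → s.card = n ν)
    (π : (ν : ℕ) → Fin (Nn ν) → ℝ)
    (hπ : ∀ ν k, π ν k = ∑ s : Finset (Fin (Nn ν)), (if k ∈ s then p ν s else 0))
    (πd : (ν : ℕ) → Fin (Nn ν) → Fin (Nn ν) → ℝ)
    (hπd : ∀ ν k l, πd ν k l = ∑ s : Finset (Fin (Nn ν)), (if k ∈ s ∧ l ∈ s then p ν s else 0))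
    -- (A1)
    (C : ℝ) (hA1 : ∀ ν k, ‖Y ν k‖ ≤ C)
    -- (A3)
    (lam : ℝ) (hlam : 0 < lam)
    (hA3a : ∀ ν k, lam ≤ π ν k)
    (CΔ : ℝ)
    (hA3c : ∀ ν (k l : Fin (Nn ν)), k ≠ l → (n ν : ℝ) * |πd ν k l - π ν k * π ν l| ≤ CΔ)
    -- estimators and the von Mises remainder
    (Nhat : (ν : ℕ) → Finset (Fin (Nn ν)) → ℝ)
    (hNhat : ∀ ν s, Nhat ν s = ∑ k ∈ s, (π ν k)⁻¹)
    (μp : (ν : ℕ) → H) (hμp : ∀ ν, μp ν = (Nn ν : ℝ)⁻¹ • ∑ k, Y ν k)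
    (μhat : (ν : ℕ) → Finset (Fin (Nn ν)) → H)
    (hμhat : ∀ ν s, μhat ν s = (Nhat ν s)⁻¹ • ∑ k ∈ s, (π ν k)⁻¹ • Y ν k)
    (R : (ν : ℕ) → Finset (Fin (Nn ν)) → H)
    (hR : ∀ ν s, R ν s = μhat ν s - μp ν
        - (Nn ν : ℝ)⁻¹ • ∑ k ∈ s, (π ν k)⁻¹ • (Y ν k - μp ν)) :
    ∀ ε : ℝ, 0 < ε →
      Tendsto (fun ν => ∑ s : Finset (Fin (Nn ν)),
          (if ε < Real.sqrt (n ν) * ‖R ν s‖ then p ν s else 0))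
        atTop (𝓝 0) := by
  intro ε hε
  obtain rfl : π = fun ν => inclProb (p ν) := funext fun ν => funext (hπ ν)
  obtain rfl : πd = fun ν => jointInclProb (p ν) := funext fun ν => funext₂ (hπd ν)
  have hR' : ∀ ν, R ν = vonMisesRemainder (p ν) (Y ν) := fun ν => funext fun s => by
    simp only [hR, hμhat, hNhat, hμp, vonMisesRemainder, hajekMean, htSize, popMean,
      Fintype.card_fin]
  set K := 2 * max C 0 * (lam⁻¹ + max CΔ 0 / lam ^ 3) / ε
  have hbound : ∀ ν, ∑ s : Finset (Fin (Nn ν)),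
      (if ε < √(n ν) * ‖R ν s‖ then p ν s else 0) ≤ K / √(n ν) := fun ν => by
    rw [hR' ν]
    exact tail_vonMisesRemainder_le (hp0 ν) (hp1 ν) (hsize ν) hlam (hA3a ν) (le_max_right _ _)
      (fun k l hkl => (hA3c ν k l hkl).trans (le_max_left _ _)) (le_max_right _ _)
      (fun k => (hA1 ν k).trans (le_max_left _ _)) hε
  have hlim : Tendsto (fun ν => K / √(n ν)) atTop (𝓝 0) := by
    simpa [div_eq_mul_inv] using (tendsto_inv_atTop_zero.comp (Real.tendsto_sqrt_atTop.comp
      (tendsto_natCast_atTop_atTop.comp hn))).const_mul K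
  exact squeeze_zero (fun ν => sum_nonneg fun s _ => by split_ifs <;> simp [hp0 ν s])
    hbound hlim

/-- Under (A1), (A2), (A3), the remainder of the first-order von Mises expansion of the mean
functional, `R_{μ,ν} = μ̂_ν − μ_ν − (1/N_ν) ∑_{k∈s_ν} (Y_{k,ν} − μ_ν)/π_{k,ν}`, is
`o_p(n_ν^{−1/2})`: for every `ε > 0`, `p_ν(√(n_ν) ‖R_{μ,ν}‖ > ε) → 0` as `ν → ∞`. -/
theorem mean_functional_remainder_negligible
    {H : Type*} [NormedAddCommGroup H] [InnerProductSpace ℝ H] [CompleteSpace H]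
    (Nn n : ℕ → ℕ) (hNpos : ∀ ν, 0 < Nn ν) (hNmono : StrictMono Nn)
    (hn : Tendsto n atTop atTop)
    (Y : (ν : ℕ) → Fin (Nn ν) → H)
    (p : (ν : ℕ) → Finset (Fin (Nn ν)) → ℝ)
    (hp0 : ∀ ν s, 0 ≤ p ν s)
    (hp1 : ∀ ν, ∑ s : Finset (Fin (Nn ν)), p ν s = 1)
    (hsize : ∀ ν s, p ν s ≠ 0 → s.card = n ν)
    (π : (ν : ℕ) → Fin (Nn ν) → ℝ)
    (hπ : ∀ ν k, π ν k = ∑ s : Finset (Fin (Nn ν)), (if k ∈ s then p ν s else 0))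
    (πd : (ν : ℕ) → Fin (Nn ν) → Fin (Nn ν) → ℝ)
    (hπd : ∀ ν k l, πd ν k l = ∑ s : Finset (Fin (Nn ν)), (if k ∈ s ∧ l ∈ s then p ν s else 0))
    -- (A1)
    (C : ℝ) (hA1 : ∀ ν k, ‖Y ν k‖ ≤ C)
    -- (A2)
    (π₀ : ℝ) (hπ₀ : π₀ ∈ Set.Ioo (0 : ℝ) 1)
    (hA2 : Tendsto (fun ν => (n ν : ℝ) / (Nn ν : ℝ)) atTop (𝓝 π₀))
    -- (A3)
    (lam lamStar : ℝ) (hlam : 0 < lam) (hlamStar : 0 < lamStar)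
    (hA3a : ∀ ν k, lam ≤ π ν k)
    (hA3b : ∀ ν k l, k ≠ l → lamStar ≤ πd ν k l)
    (CΔ : ℝ)
    (hA3c : ∀ ν (k l : Fin (Nn ν)), k ≠ l → (n ν : ℝ) * |πd ν k l - π ν k * π ν l| ≤ CΔ)
    -- estimators and the von Mises remainder
    (Nhat : (ν : ℕ) → Finset (Fin (Nn ν)) → ℝ)
    (hNhat : ∀ ν s, Nhat ν s = ∑ k ∈ s, (π ν k)⁻¹)
    (μp : (ν : ℕ) → H) (hμp : ∀ ν, μp ν = (Nn ν : ℝ)⁻¹ • ∑ k, Y ν k)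
    (μhat : (ν : ℕ) → Finset (Fin (Nn ν)) → H)
    (hμhat : ∀ ν s, μhat ν s = (Nhat ν s)⁻¹ • ∑ k ∈ s, (π ν k)⁻¹ • Y ν k)
    (R : (ν : ℕ) → Finset (Fin (Nn ν)) → H)
    (hR : ∀ ν s, R ν s = μhat ν s - μp ν
        - (Nn ν : ℝ)⁻¹ • ∑ k ∈ s, (π ν k)⁻¹ • (Y ν k - μp ν)) :
    ∀ ε : ℝ, 0 < ε →
      Tendsto (fun ν => ∑ s : Finset (Fin (Nn ν)),
          (if ε < Real.sqrt (n ν) * ‖R ν s‖ then p ν s else 0))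
        atTop (𝓝 0) :=
  mean_functional_remainder_negligible_general Nn n hn Y p hp0 hp1 hsize π hπ πd hπd C hA1 lam hlam
    hA3a CΔ hA3c Nhat hNhat μp hμp μhat hμhat R hR
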